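/- arXiv:1704.07564 — 3 statements merged into one kernel-verified Lean document; each statement's English description precedes it below -/
import Mathlib

section
/- Let {|φ_ω⟩}_{ω=1,...,d} be an orthonormal basis of H, and define the discriminate-and-reprepare protocol by I_ω(ρ) = |φ_ω⟩⟨φ_ω| ρ |φ_ω⟩⟨φ_ω| and C_ω(ρ) = |φ_ω⟩⟨φ_ω| Tr(ρ). Then for any trace-preserving map N, the average operation E = Σ_ω C_ω ∘ N ∘ I_ω satisfies Tr_HS E = d, and hence the average fidelity equals 2/(d+1), independently of N and of the chosen basis. -/
open Matrix

/-- The measurement part of the discriminate-and-reprepare protocol: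
    `I_ω(ρ) = |φ_ω⟩⟨φ_ω| ρ |φ_ω⟩⟨φ_ω|`. -/
noncomputable def drInstr {d : ℕ} (φ : Fin d → (Fin d → ℂ)) (ω : Fin d) :
    Matrix (Fin d) (Fin d) ℂ →ₗ[ℂ] Matrix (Fin d) (Fin d) ℂ :=
  (LinearMap.mulLeft ℂ (Matrix.vecMulVec (φ ω) (star (φ ω)))).comp
    (LinearMap.mulRight ℂ (Matrix.vecMulVec (φ ω) (star (φ ω))))

/-- The repreparation part: `C_ω(ρ) = (Tr ρ) |φ_ω⟩⟨φ_ω|`. -/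
noncomputable def drCorr {d : ℕ} (φ : Fin d → (Fin d → ℂ)) (ω : Fin d) :
    Matrix (Fin d) (Fin d) ℂ →ₗ[ℂ] Matrix (Fin d) (Fin d) ℂ :=
  (Matrix.traceLinearMap (Fin d) ℂ ℂ).smulRight (Matrix.vecMulVec (φ ω) (star (φ ω)))

lemma vecMulVec_mul_vecMulVec {d : ℕ} (a b c e : Fin d → ℂ) :
    Matrix.vecMulVec a b * Matrix.vecMulVec c e = (b ⬝ᵥ c) • Matrix.vecMulVec a e := by
  ext i j
  simp [Matrix.mul_apply, Matrix.vecMulVec_apply, dotProduct, Finset.mul_sum,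
    Finset.sum_mul]
  congr 1; ext k; ring

lemma trace_vecMulVec' {d : ℕ} (a b : Fin d → ℂ) :
    (Matrix.vecMulVec a b).trace = b ⬝ᵥ a := by
  simp [Matrix.trace, Matrix.diag, Matrix.vecMulVec_apply, dotProduct, mul_comm]

/-- for an orthonormal basis `{φ_ω}` of `ℂ^d` and any
    trace-preserving `N`, the average operation `E = Σ_ω C_ω ∘ N ∘ I_ω` of the
    discriminate-and-reprepare protocol satisfies `Tr_HS E = d`, hence the
    average fidelity `(d + Tr_HS E)/(d(d+1))` equals `2/(d+1)`,
    independently of `N` and of the basis. -/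
theorem stmt3 {d : ℕ} (hd : 1 ≤ d) (φ : Fin d → (Fin d → ℂ))
    (hortho : ∀ ω ω', star (φ ω) ⬝ᵥ φ ω' = if ω = ω' then 1 else 0)
    (N : Matrix (Fin d) (Fin d) ℂ →ₗ[ℂ] Matrix (Fin d) (Fin d) ℂ)
    (hN : ∀ X, (N X).trace = X.trace) :
    LinearMap.trace ℂ (Matrix (Fin d) (Fin d) ℂ)
        (∑ ω, (drCorr φ ω) ∘ₗ N ∘ₗ (drInstr φ ω)) = (d : ℂ) ∧
      ((d : ℂ) + LinearMap.trace ℂ (Matrix (Fin d) (Fin d) ℂ)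
          (∑ ω, (drCorr φ ω) ∘ₗ N ∘ₗ (drInstr φ ω))) / ((d : ℂ) * ((d : ℂ) + 1))
        = 2 / ((d : ℂ) + 1) := by
  have hPP : ∀ ω : Fin d,
      Matrix.vecMulVec (φ ω) (star (φ ω)) * Matrix.vecMulVec (φ ω) (star (φ ω))
        = Matrix.vecMulVec (φ ω) (star (φ ω)) := by
    intro ω
    rw [vecMulVec_mul_vecMulVec, hortho ω ω, if_pos rfl, one_smul]
  set M := Matrix (Fin d) (Fin d) ℂ
  have key : LinearMap.trace ℂ M (∑ ω, (drCorr φ ω) ∘ₗ N ∘ₗ (drInstr φ ω)) = (d : ℂ) := by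
    have h1 : ∀ ω : Fin d, (drCorr φ ω) ∘ₗ N ∘ₗ (drInstr φ ω) =
        dualTensorHom ℂ M M
          ((Matrix.traceLinearMap (Fin d) ℂ ℂ ∘ₗ
              LinearMap.mulRight ℂ (Matrix.vecMulVec (φ ω) (star (φ ω)))) ⊗ₜ[ℂ]
            Matrix.vecMulVec (φ ω) (star (φ ω))) := by
      intro ω
      apply LinearMap.ext; intro ρ
      simp only [LinearMap.comp_apply, drCorr, drInstr, LinearMap.smulRight_apply,
        Matrix.traceLinearMap_apply, dualTensorHom_apply, LinearMap.mulLeft_apply,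
        LinearMap.mulRight_apply, hN]
      congr 1
      rw [← Matrix.mul_assoc, Matrix.trace_mul_cycle, hPP]
      exact Matrix.trace_mul_comm _ _
    rw [map_sum]
    have h2 : ∀ ω : Fin d,
        LinearMap.trace ℂ M ((drCorr φ ω) ∘ₗ N ∘ₗ (drInstr φ ω)) = 1 := by
      intro ω
      rw [h1 ω, LinearMap.trace_eq_contract_apply, contractLeft_apply,
        LinearMap.comp_apply, LinearMap.mulRight_apply, hPP,
        Matrix.traceLinearMap_apply, trace_vecMulVec', hortho ω ω, if_pos rfl]
    simp [h2]
  refine ⟨key, ?_⟩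
  rw [key]
  have h0 : (d : ℂ) ≠ 0 := Nat.cast_ne_zero.mpr (by omega)
  have h1 : (d : ℂ) + 1 ≠ 0 := by
    have : ((d + 1 : ℕ) : ℂ) ≠ 0 := Nat.cast_ne_zero.mpr d.succ_ne_zero
    push_cast at this; exact this
  field_simp
  ring
end

section
/- Let α, β, δ, ζ ∈ ℝ³ and γ, ε ∈ ℝ satisfy ‖α + β‖ ≤ 1, ‖α − β‖ ≤ 1, ‖δ + ζ‖ ≤ γ + ε, and ‖δ − ζ‖ ≤ γ − ε. Then γ + α·δ + β·ζ ≤ 2γ. -/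
open RealInnerProductSpace

/-- the key estimate in the elementary proof of the dephasing
    bound: if `‖α ± β‖ ≤ 1`, `‖δ + ζ‖ ≤ γ + ε` and `‖δ − ζ‖ ≤ γ − ε`, then
    `γ + α·δ + β·ζ ≤ 2γ`. -/
theorem stmt13 (a b δ ζ : EuclideanSpace ℝ (Fin 3)) (γ ε : ℝ)
    (h1 : ‖a + b‖ ≤ 1) (h2 : ‖a - b‖ ≤ 1)
    (h3 : ‖δ + ζ‖ ≤ γ + ε) (h4 : ‖δ - ζ‖ ≤ γ - ε) :
    γ + ⟪a, δ⟫ + ⟪b, ζ⟫ ≤ 2 * γ := by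
  have key : ⟪a, δ⟫ + ⟪b, ζ⟫
      = (⟪a + b, δ + ζ⟫ + ⟪a - b, δ - ζ⟫) / 2 := by
    simp [inner_add_add_self, inner_sub_sub_self, inner_add_left, inner_add_right,
      inner_sub_left, inner_sub_right, real_inner_comm]
    ring
  have c1 : ⟪a + b, δ + ζ⟫ ≤ γ + ε := by
    calc ⟪a + b, δ + ζ⟫ ≤ ‖a + b‖ * ‖δ + ζ‖ := real_inner_le_norm _ _
    _ ≤ 1 * (γ + ε) := by
        apply mul_le_mul h1 h3 (norm_nonneg _) zero_le_one
    _ = γ + ε := one_mul _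
  have c2 : ⟪a - b, δ - ζ⟫ ≤ γ - ε := by
    calc ⟪a - b, δ - ζ⟫ ≤ ‖a - b‖ * ‖δ - ζ‖ := real_inner_le_norm _ _
    _ ≤ 1 * (γ - ε) := by
        apply mul_le_mul h2 h4 (norm_nonneg _) zero_le_one
    _ = γ - ε := one_mul _
  linarith
end

section
/- If E is a unital trace-preserving completely positive map on operators of a finite-dimensional Hilbert space, then the von Neumann entropy does not decrease: S(E(ρ)) ≥ S(ρ) for every density operator ρ. -/
/-!
Diagonalise `ρ = ∑ᵢ λᵢ |uᵢ⟩⟨uᵢ|` and `E ρ = ∑ⱼ μⱼ |vⱼ⟩⟨vⱼ|`. By linearity `μⱼ = ∑ᵢ Bⱼᵢ λᵢ` with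
`Bⱼᵢ = ⟨vⱼ, E(|uᵢ⟩⟨uᵢ|) vⱼ⟩`, and `B` is doubly stochastic: positivity of `E` makes its entries
nonnegative, unitality gives `∑ᵢ Bⱼᵢ = ⟨vⱼ, vⱼ⟩ = 1` and trace preservation gives
`∑ⱼ Bⱼᵢ = Tr E(|uᵢ⟩⟨uᵢ|) = 1`. Jensen's inequality for the concave `η(t) = -t log t`, applied
row by row, then yields `∑ⱼ η(μⱼ) ≥ ∑ⱼ ∑ᵢ Bⱼᵢ η(λᵢ) = ∑ᵢ η(λᵢ)`.
-/

open Matrix ComplexOrder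

/-- `id_n ⊗ Φ`. -/
noncomputable def applyBlocks {d : ℕ} (n : ℕ)
    (Φ : Matrix (Fin d) (Fin d) ℂ →ₗ[ℂ] Matrix (Fin d) (Fin d) ℂ)
    (M : Matrix (Fin n × Fin d) (Fin n × Fin d) ℂ) :
    Matrix (Fin n × Fin d) (Fin n × Fin d) ℂ :=
  Matrix.of fun p q => Φ (Matrix.of fun i j => M (p.1, i) (q.1, j)) p.2 q.2

/-- Complete positivity. -/
def IsCP {d : ℕ}
    (Φ : Matrix (Fin d) (Fin d) ℂ →ₗ[ℂ] Matrix (Fin d) (Fin d) ℂ) : Prop :=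
  ∀ (n : ℕ) (M : Matrix (Fin n × Fin d) (Fin n × Fin d) ℂ),
    M.PosSemidef → (applyBlocks n Φ M).PosSemidef

/-- The von Neumann entropy `S(ρ) = −Tr(ρ ln ρ) = −Σ_i λ_i ln λ_i`
    (junk value `0` on non-Hermitian matrices). -/
noncomputable def vnEntropy {d : ℕ} (ρ : Matrix (Fin d) (Fin d) ℂ) : ℝ :=
  if h : ρ.IsHermitian then -∑ i, (h.eigenvalues i) * Real.log (h.eigenvalues i)
  else 0

theorem IsCP.posSemidef_map {d : ℕ} {Φ : Matrix (Fin d) (Fin d) ℂ →ₗ[ℂ] Matrix (Fin d) (Fin d) ℂ}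
    (hΦ : IsCP Φ) {P : Matrix (Fin d) (Fin d) ℂ} (hP : P.PosSemidef) : (Φ P).PosSemidef :=
  -- for `n = 1`, `applyBlocks 1 Φ` is `Φ` up to relabelling `Fin 1 × Fin d` as `Fin d`
  (hΦ 1 _ (hP.submatrix Prod.snd)).submatrix fun i => (0, i)

theorem ConcaveOn.sum_le_sum_mulVec_of_mem_doublyStochastic {n : Type*} [Fintype n]
    [DecidableEq n] {f : ℝ → ℝ} {s : Set ℝ} (hf : ConcaveOn ℝ s f) {B : Matrix n n ℝ}
    (hB : B ∈ doublyStochastic ℝ n) {x : n → ℝ} (hx : ∀ i, x i ∈ s) :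
    ∑ i, f (x i) ≤ ∑ j, f ((B *ᵥ x) j) := by
  obtain ⟨hB0, hrow, hcol⟩ := mem_doublyStochastic_iff_sum.mp hB
  calc ∑ i, f (x i) = ∑ j, ∑ i, B j i • f (x i) := by
        rw [Finset.sum_comm]
        simp only [smul_eq_mul, ← Finset.sum_mul, hcol, one_mul]
    _ ≤ ∑ j, f (∑ i, B j i • x i) :=
        Finset.sum_le_sum fun j _ => hf.le_map_sum (fun i _ => hB0 j i) (hrow j) fun i _ => hx i
    _ = ∑ j, f ((B *ᵥ x) j) := rfl

section TransitionMatrix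

variable {n : Type*} [Fintype n] [DecidableEq n] (Φ : Matrix n n ℂ →ₗ[ℂ] Matrix n n ℂ)
  (U V : Matrix n n ℂ)

noncomputable def transitionMatrix : Matrix n n ℝ :=
  Matrix.of fun j i => ((Vᴴ * Φ (U * single i i 1 * Uᴴ) * V) j j).re

variable {Φ U V}

theorem transitionMatrix_nonneg (hΦ : ∀ P : Matrix n n ℂ, P.PosSemidef → (Φ P).PosSemidef)
    (j i : n) : 0 ≤ transitionMatrix Φ U V j i := by
  have hP : (U * single i i 1 * Uᴴ).PosSemidef := by
    simpa only [← diagonal_single] using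
      (PosSemidef.diagonal (Pi.single_nonneg.mpr zero_le_one)).mul_mul_conjTranspose_same U
  exact Complex.nonneg_iff.mp ((hΦ _ hP).conjTranspose_mul_mul_same V).diag_nonneg |>.1

theorem sum_transitionMatrix_row (hΦ : Φ 1 = 1) (hU : U ∈ unitaryGroup n ℂ)
    (hV : V ∈ unitaryGroup n ℂ) (j : n) : ∑ i, transitionMatrix Φ U V j i = 1 := by
  have hsum : ∑ i, U * single i i 1 * Uᴴ = 1 := by
    rw [← Finset.sum_mul, ← Finset.mul_sum, sum_single_one, mul_one, ← star_eq_conjTranspose,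
      mem_unitaryGroup_iff.mp hU]
  calc ∑ i, transitionMatrix Φ U V j i
      = ((Vᴴ * Φ (∑ i, U * single i i 1 * Uᴴ) * V) j j).re := by
        simp only [transitionMatrix, of_apply, map_sum, Finset.mul_sum, Finset.sum_mul,
          Matrix.sum_apply, Complex.re_sum]
    _ = 1 := by
        rw [hsum, hΦ, mul_one, ← star_eq_conjTranspose, mem_unitaryGroup_iff'.mp hV,
          one_apply_eq, Complex.one_re]

theorem sum_transitionMatrix_col (hΦ : ∀ X, (Φ X).trace = X.trace) (hU : U ∈ unitaryGroup n ℂ)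
    (hV : V ∈ unitaryGroup n ℂ) (i : n) : ∑ j, transitionMatrix Φ U V j i = 1 := by
  simp only [transitionMatrix, of_apply, ← Complex.re_sum]
  change (trace (Vᴴ * Φ (U * single i i 1 * Uᴴ) * V)).re = 1
  rw [← star_eq_conjTranspose, ← star_eq_conjTranspose, trace_mul_cycle,
    mem_unitaryGroup_iff.mp hV, one_mul, hΦ, trace_mul_cycle, mem_unitaryGroup_iff'.mp hU, one_mul,
    trace_single_eq_same, Complex.one_re]

theorem transitionMatrix_mem_doublyStochastic
    (hpos : ∀ P : Matrix n n ℂ, P.PosSemidef → (Φ P).PosSemidef) (hunital : Φ 1 = 1)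
    (htrace : ∀ X, (Φ X).trace = X.trace) (hU : U ∈ unitaryGroup n ℂ)
    (hV : V ∈ unitaryGroup n ℂ) : transitionMatrix Φ U V ∈ doublyStochastic ℝ n :=
  mem_doublyStochastic_iff_sum.mpr ⟨transitionMatrix_nonneg hpos,
    sum_transitionMatrix_row hunital hU hV, sum_transitionMatrix_col htrace hU hV⟩

theorem transitionMatrix_mulVec {A : Matrix n n ℂ} {a b : n → ℝ}
    (hA : A = U * diagonal (Complex.ofReal ∘ a) * Uᴴ)
    (hΦA : Vᴴ * Φ A * V = diagonal (Complex.ofReal ∘ b)) :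
    transitionMatrix Φ U V *ᵥ a = b := by
  have hA' : A = ∑ i, (a i : ℂ) • (U * single i i 1 * Uᴴ) := by
    rw [hA, ← sum_single_eq_diagonal, Finset.mul_sum, Finset.sum_mul]
    refine Finset.sum_congr rfl fun i _ => ?_
    rw [← Matrix.smul_mul, ← Matrix.mul_smul, smul_single, smul_eq_mul, mul_one,
      Function.comp_apply]
  funext j
  have hj := congrFun (congrFun hΦA j) j
  rw [diagonal_apply_eq, hA'] at hj
  simp only [map_sum, map_smul, Finset.mul_sum, Finset.sum_mul, Matrix.mul_smul, Matrix.smul_mul,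
    Matrix.sum_apply, Matrix.smul_apply, smul_eq_mul, Function.comp_apply] at hj
  simp only [mulVec, dotProduct, transitionMatrix, of_apply]
  rw [← Complex.ofReal_re (b j), ← hj, Complex.re_sum]
  exact Finset.sum_congr rfl fun i _ => by rw [Complex.re_ofReal_mul, mul_comm]

end TransitionMatrix

theorem vnEntropy_eq_sum_negMulLog {d : ℕ} {A : Matrix (Fin d) (Fin d) ℂ} (hA : A.IsHermitian) :
    vnEntropy A = ∑ i, Real.negMulLog (hA.eigenvalues i) := by
  simp only [vnEntropy, dif_pos hA, Real.negMulLog, neg_mul, Finset.sum_neg_distrib]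

theorem stmt15_general {d : ℕ}
    (E : Matrix (Fin d) (Fin d) ℂ →ₗ[ℂ] Matrix (Fin d) (Fin d) ℂ)
    (hCP : IsCP E) (hunital : E 1 = 1) (hTP : ∀ X, (E X).trace = X.trace)
    (ρ : Matrix (Fin d) (Fin d) ℂ) (hρ : ρ.PosSemidef) :
    vnEntropy ρ ≤ vnEntropy (E ρ) := by
  have hEρ : (E ρ).PosSemidef := hCP.posSemidef_map hρ
  set U := hρ.1.eigenvectorUnitary
  set V := hEρ.1.eigenvectorUnitary
  have hB : transitionMatrix E U V ∈ doublyStochastic ℝ (Fin d) :=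
    transitionMatrix_mem_doublyStochastic (fun _ ↦ hCP.posSemidef_map) hunital hTP U.2 V.2
  have hspec : transitionMatrix E U V *ᵥ hρ.1.eigenvalues = hEρ.1.eigenvalues := by
    refine transitionMatrix_mulVec (A := ρ) ?_ ?_
    · simpa only [Unitary.conjStarAlgAut_apply, star_eq_conjTranspose, Complex.coe_algebraMap]
        using hρ.1.spectral_theorem
    · simpa only [Unitary.conjStarAlgAut_apply, Unitary.coe_star, star_eq_conjTranspose,
        conjTranspose_conjTranspose, Complex.coe_algebraMap]
        using hEρ.1.conjStarAlgAut_star_eigenvectorUnitary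
  rw [vnEntropy_eq_sum_negMulLog hρ.1, vnEntropy_eq_sum_negMulLog hEρ.1, ← hspec]
  exact Real.concaveOn_negMulLog.sum_le_sum_mulVec_of_mem_doublyStochastic hB
    hρ.eigenvalues_nonneg

/-- a unital trace-preserving completely positive map never
    decreases the von Neumann entropy of a density matrix. -/
theorem stmt15 {d : ℕ}
    (E : Matrix (Fin d) (Fin d) ℂ →ₗ[ℂ] Matrix (Fin d) (Fin d) ℂ)
    (hCP : IsCP E) (hunital : E 1 = 1) (hTP : ∀ X, (E X).trace = X.trace)
    (ρ : Matrix (Fin d) (Fin d) ℂ) (hρ : ρ.PosSemidef) (hρ1 : ρ.trace = 1) :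
    vnEntropy ρ ≤ vnEntropy (E ρ) :=
  stmt15_general E hCP hunital hTP ρ hρ
end
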